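/- arXiv:2108.11135 — 7 statements merged into one kernel-verified Lean document; each statement's English description precedes it below -/
import Mathlib

section
/- Let E be a real normed vector space, ι a finite index set, and θ₀ ∈ E. Let p, r, q : E → ι → ℝ be such that each coordinate function θ ↦ p θ i, θ ↦ r θ i and θ ↦ q θ i is differentiable at θ₀ with Fréchet derivatives Dpᵢ, Drᵢ and Dqᵢ, that all coordinates of p θ₀, r θ₀, q θ₀ are positive, and that ∑ᵢ p θ i = 1 and ∑ᵢ r θ i = 1 for all θ in a neighborhood of θ₀. Then the map θ ↦ KL(p θ ‖ r θ) + KL(r θ ‖ q θ) is differentiable at θ₀ with Fréchet derivative ∑ᵢ log(p θ₀ i / r θ₀ i) • Dpᵢ + ∑ᵢ ( − (p θ₀ i / r θ₀ i) + log(r θ₀ i / q θ₀ i) ) • Drᵢ − ∑ᵢ (r θ₀ i / q θ₀ i) • Dqᵢ. -/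
open Filter

/-!
Each summand `x log (x / y)` of a Kullback–Leibler divergence has differential
`(log (x / y) + 1) dx - (x / y) dy` at positive `x, y`. Summing over `i`, the constant terms
contribute `∑ i, dpᵢ`, which vanishes because `∑ i, pᵢ = 1` near `θ₀`; adding the two
divergences and collecting the coefficients of `dr` gives the bridged formula.
-/

section

variable {E : Type*} [NormedAddCommGroup E] [NormedSpace ℝ E] {θ₀ : E}

theorem HasFDerivAt.mul_log_div {f g : E → ℝ} {Df Dg : E →L[ℝ] ℝ}
    (hf : HasFDerivAt f Df θ₀) (hg : HasFDerivAt g Dg θ₀) (hf0 : 0 < f θ₀) (hg0 : 0 < g θ₀) :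
    HasFDerivAt (fun θ => f θ * Real.log (f θ / g θ))
      ((Real.log (f θ₀ / g θ₀) + 1) • Df - (f θ₀ / g θ₀) • Dg) θ₀ := by
  have hsplit : (fun θ => f θ * (Real.log (f θ) - Real.log (g θ))) =ᶠ[nhds θ₀]
      fun θ => f θ * Real.log (f θ / g θ) := by
    filter_upwards [hf.continuousAt.eventually (eventually_gt_nhds hf0),
      hg.continuousAt.eventually (eventually_gt_nhds hg0)] with θ hfθ hgθ
    rw [Real.log_div hfθ.ne' hgθ.ne']
  refine (hf.mul ((hf.log hf0.ne').fun_sub (hg.log hg0.ne'))).congr_of_eventuallyEq hsplit.symm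
    |>.congr_fderiv ?_
  rw [Real.log_div hf0.ne' hg0.ne', smul_sub, smul_smul, smul_smul, mul_inv_cancel₀ hf0.ne',
    ← div_eq_mul_inv]
  module

theorem HasFDerivAt.eq_zero_of_eventuallyEq_const {f : E → ℝ} {f' : E →L[ℝ] ℝ}
    {c : ℝ} (hf : HasFDerivAt f f' θ₀) (hc : f =ᶠ[nhds θ₀] fun _ => c) : f' = 0 :=
  hf.unique ((hasFDerivAt_const c θ₀).congr_of_eventuallyEq hc)

variable {ι : Type*} [Fintype ι]

theorem hasFDerivAt_sum_mul_log_div {p q : E → ι → ℝ} {Dp Dq : ι → E →L[ℝ] ℝ}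
    (hp : ∀ i, HasFDerivAt (fun θ => p θ i) (Dp i) θ₀)
    (hq : ∀ i, HasFDerivAt (fun θ => q θ i) (Dq i) θ₀)
    (hppos : ∀ i, 0 < p θ₀ i) (hqpos : ∀ i, 0 < q θ₀ i) {c : ℝ}
    (hpsum : ∀ᶠ θ in nhds θ₀, ∑ i, p θ i = c) :
    HasFDerivAt (fun θ => ∑ i, p θ i * Real.log (p θ i / q θ i))
      (∑ i, (Real.log (p θ₀ i / q θ₀ i) • Dp i - (p θ₀ i / q θ₀ i) • Dq i)) θ₀ := by
  have hDp : ∑ i, Dp i = 0 :=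
    (HasFDerivAt.fun_sum fun i _ => hp i).eq_zero_of_eventuallyEq_const hpsum
  refine (HasFDerivAt.fun_sum fun i _ =>
    (hp i).mul_log_div (hq i) (hppos i) (hqpos i)).congr_fderiv ?_
  simp only [add_smul, one_smul, add_sub_right_comm, Finset.sum_add_distrib, hDp, add_zero]

end

/-- Bridged gradient identity (equation (5)): the Fréchet derivative of
`θ ↦ KL(p θ ‖ r θ) + KL(r θ ‖ q θ)` at `θ₀`. -/
theorem bridged_kl_hasFDerivAt
    {E : Type*} [NormedAddCommGroup E] [NormedSpace ℝ E]
    {ι : Type*} [Fintype ι] (θ₀ : E)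
    (p r q : E → ι → ℝ) (Dp Dr Dq : ι → E →L[ℝ] ℝ)
    (hp : ∀ i, HasFDerivAt (fun θ => p θ i) (Dp i) θ₀)
    (hr : ∀ i, HasFDerivAt (fun θ => r θ i) (Dr i) θ₀)
    (hq : ∀ i, HasFDerivAt (fun θ => q θ i) (Dq i) θ₀)
    (hppos : ∀ i, 0 < p θ₀ i) (hrpos : ∀ i, 0 < r θ₀ i) (hqpos : ∀ i, 0 < q θ₀ i)
    (hpsum : ∀ᶠ θ in nhds θ₀, ∑ i, p θ i = 1)
    (hrsum : ∀ᶠ θ in nhds θ₀, ∑ i, r θ i = 1) :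
    HasFDerivAt
      (fun θ => (∑ i, p θ i * Real.log (p θ i / r θ i)) +
        (∑ i, r θ i * Real.log (r θ i / q θ i)))
      ((∑ i, Real.log (p θ₀ i / r θ₀ i) • Dp i) +
        (∑ i, (-(p θ₀ i / r θ₀ i) + Real.log (r θ₀ i / q θ₀ i)) • Dr i) -
        (∑ i, (r θ₀ i / q θ₀ i) • Dq i)) θ₀ := by
  refine ((hasFDerivAt_sum_mul_log_div hp hr hppos hrpos hpsum).add
    (hasFDerivAt_sum_mul_log_div hr hq hrpos hqpos hrsum)).congr_fderiv ?_
  simp only [Finset.sum_sub_distrib, add_smul, neg_smul, Finset.sum_add_distrib,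
    Finset.sum_neg_distrib]
  abel
end

section
/- Let 𝒳 be a set, f : 𝒳 → ℝ, y ∈ ℝ with y = 1 or y = −1, and S ⊆ 𝒳 a set containing the point x. Then (∃ x' ∈ S, f(x') · y ≤ 0) holds if and only if (f(x) · y ≤ 0) or (0 < f(x) · y and ∃ x' ∈ S, f(x) · f(x') ≤ 0). -/
/-- Pointwise form of the error decomposition ℛ_rob = ℛ_nat + ℛ_bdy (equation (8)):
a robust error at `x` occurs iff either a natural classification error occurs, or
`x` is correctly classified but some `x'` in the perturbation set lies across the
decision boundary. -/
theorem robust_error_decomposition_pointwise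
    {𝒳 : Type*} (f : 𝒳 → ℝ) (y : ℝ) (hy : y = 1 ∨ y = -1)
    (S : Set 𝒳) (x : 𝒳) (hx : x ∈ S) :
    (∃ x' ∈ S, f x' * y ≤ 0) ↔
      (f x * y ≤ 0 ∨ (0 < f x * y ∧ ∃ x' ∈ S, f x * f x' ≤ 0)) := by
  have hyy : y * y = 1 := by rcases hy with h | h <;> rw [h] <;> norm_num
  constructor
  · rintro ⟨x', hx', h⟩
    rcases le_or_gt (f x * y) 0 with hn | hn
    · exact Or.inl hn
    · refine Or.inr ⟨hn, x', hx', ?_⟩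
      nlinarith [mul_nonneg (le_of_lt hn) (neg_nonneg.mpr h)]
  · rintro (h | ⟨hp, x', hx', h⟩)
    · exact ⟨x, hx, h⟩
    · refine ⟨x', hx', ?_⟩
      nlinarith [mul_nonneg (le_of_lt hp) (neg_nonneg.mpr h)]
end

section
/- Let (Ω, μ) be a measure space, 𝒳 a metric space, f : 𝒳 → ℝ, ε ≥ 0, X : Ω → 𝒳, and Y : Ω → ℝ with Y(ω) ∈ {−1, 1} for every ω. Define A = {ω | ∃ x' ∈ closedBall(X(ω), ε), f(x') · Y(ω) ≤ 0}, B = {ω | f(X(ω)) · Y(ω) ≤ 0}, and C = {ω | 0 < f(X(ω)) · Y(ω) and ∃ x' ∈ closedBall(X(ω), ε), f(X(ω)) · f(x') ≤ 0}. If B and C are measurable, then μ(A) = μ(B) + μ(C). -/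
open MeasureTheory

/-- The paper's decomposition ℛ_rob(f) = ℛ_nat(f) + ℛ_bdy(f) (equation (8)/(A.2)):
the measure of the robust-error event equals the sum of the measures of the
natural-error event and the boundary-error event. -/
theorem robust_error_decomposition
    {Ω : Type*} [MeasurableSpace Ω] (μ : Measure Ω)
    {𝒳 : Type*} [MetricSpace 𝒳] (f : 𝒳 → ℝ) (ε : ℝ) (hε : 0 ≤ ε)
    (X : Ω → 𝒳) (Y : Ω → ℝ) (hY : ∀ ω, Y ω = 1 ∨ Y ω = -1)
    (hB : MeasurableSet {ω | f (X ω) * Y ω ≤ 0})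
    (hC : MeasurableSet {ω | 0 < f (X ω) * Y ω ∧
      ∃ x' ∈ Metric.closedBall (X ω) ε, f (X ω) * f x' ≤ 0}) :
    μ {ω | ∃ x' ∈ Metric.closedBall (X ω) ε, f x' * Y ω ≤ 0} =
      μ {ω | f (X ω) * Y ω ≤ 0} +
      μ {ω | 0 < f (X ω) * Y ω ∧
        ∃ x' ∈ Metric.closedBall (X ω) ε, f (X ω) * f x' ≤ 0} := by
  have hY2 : ∀ ω, Y ω * Y ω = 1 := by
    intro ω; rcases hY ω with h | h <;> rw [h] <;> norm_num
  have hEq : {ω | ∃ x' ∈ Metric.closedBall (X ω) ε, f x' * Y ω ≤ 0} =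
      {ω | f (X ω) * Y ω ≤ 0} ∪ {ω | 0 < f (X ω) * Y ω ∧
        ∃ x' ∈ Metric.closedBall (X ω) ε, f (X ω) * f x' ≤ 0} := by
    ext ω
    simp only [Set.mem_setOf_eq, Set.mem_union]
    constructor
    · rintro ⟨x', hx', hle⟩
      rcases le_or_gt (f (X ω) * Y ω) 0 with h | h
      · exact Or.inl h
      · refine Or.inr ⟨h, x', hx', ?_⟩
        have : f (X ω) * f x' = (f (X ω) * Y ω) * (f x' * Y ω) := by
          rcases hY ω with h' | h' <;> rw [h'] <;> ring
        rw [this]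
        exact mul_nonpos_of_nonneg_of_nonpos h.le hle
    · rintro (h | ⟨h, x', hx', hle⟩)
      · exact ⟨X ω, Metric.mem_closedBall_self hε, h⟩
      · refine ⟨x', hx', ?_⟩
        rcases hY ω with h' | h' <;> rw [h'] at h ⊢ <;> nlinarith
  have hdisj : Disjoint {ω | f (X ω) * Y ω ≤ 0} {ω | 0 < f (X ω) * Y ω ∧
      ∃ x' ∈ Metric.closedBall (X ω) ε, f (X ω) * f x' ≤ 0} := by
    rw [Set.disjoint_left]
    rintro ω h1 ⟨h2, _⟩
    exact absurd h1 (not_le.mpr h2)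
  rw [hEq, measure_union hdisj hC]
end

section
/- Let (Ω, μ) be a measure space, 𝒳 a metric space, f : 𝒳 → ℝ, ε ≥ 0, X : Ω → 𝒳, Y : Ω → ℝ, m ≥ 1, and β > 0. Let φ : ℝ → ℝ satisfy 0 ≤ φ(z) for all z and 1 ≤ φ(z) whenever z ≤ 0. Suppose that for each ω there is a sequence a(ω) : ℕ → ℝ (the classifier scores along a bridged path) such that whenever there exists x' ∈ closedBall(X(ω), ε) with f(X(ω)) · f(x') < 0, one has a(ω)(0) · a(ω)(m) < 0. If the set C = {ω | 0 < f(X(ω)) · Y(ω) and ∃ x' ∈ closedBall(X(ω), ε), f(X(ω)) · f(x') < 0} is measurable and the function ω ↦ ∑_{k=0}^{m-1} φ(β · a(ω)(k) · a(ω)(k+1)) is integrable, then μ(C) ≤ ∫_Ω ∑_{k=0}^{m-1} φ(β · a(ω)(k) · a(ω)(k+1)) dμ(ω). -/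
open MeasureTheory

/-- If a sequence changes sign from index 0 to index `m`, some consecutive
product is nonpositive. -/
lemma exists_consec_nonpos (b : ℕ → ℝ) (m : ℕ) (h : b 0 * b m < 0) :
    ∃ k ∈ Finset.range m, b k * b (k + 1) ≤ 0 := by
  by_contra hcon
  push_neg at hcon
  have key : ∀ n ≤ m, 0 < b 0 * b n := by
    intro n hn
    induction n with
    | zero =>
      have : b 0 ≠ 0 := by
        intro h0
        rw [h0, zero_mul] at h
        exact lt_irrefl _ h
      exact mul_self_pos.mpr this
    | succ n ih =>
      have h1 : 0 < b 0 * b n := ih (Nat.le_of_succ_le hn)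
      have h2 : 0 < b n * b (n + 1) :=
        hcon n (Finset.mem_range.mpr (Nat.lt_of_succ_le hn))
      have hbn : b n ≠ 0 := by
        intro h0; rw [h0] at h2; simp at h2
      have := mul_pos h1 h2
      nlinarith [sq_nonneg (b n)]
  exact absurd (key m le_rfl) (not_lt.mpr h.le)

/-- Substantive bound in Theorem 1: the boundary error is upper-bounded by the
expected sum of surrogate losses over the `m` bridged segments. -/
theorem boundary_error_le_bridged_surrogate
    {Ω : Type*} [MeasurableSpace Ω] (μ : Measure Ω)
    {𝒳 : Type*} [MetricSpace 𝒳] (f : 𝒳 → ℝ) (ε : ℝ) (hε : 0 ≤ ε)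
    (X : Ω → 𝒳) (Y : Ω → ℝ)
    (m : ℕ) (hm : 1 ≤ m) (β : ℝ) (hβ : 0 < β)
    (φ : ℝ → ℝ) (hφ0 : ∀ z, 0 ≤ φ z) (hφ1 : ∀ z, z ≤ 0 → 1 ≤ φ z)
    (a : Ω → ℕ → ℝ)
    (ha : ∀ ω, (∃ x' ∈ Metric.closedBall (X ω) ε, f (X ω) * f x' < 0) →
      a ω 0 * a ω m < 0)
    (hC : MeasurableSet {ω | 0 < f (X ω) * Y ω ∧
      ∃ x' ∈ Metric.closedBall (X ω) ε, f (X ω) * f x' < 0})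
    (hint : Integrable (fun ω => ∑ k ∈ Finset.range m, φ (β * (a ω k * a ω (k + 1)))) μ) :
    μ {ω | 0 < f (X ω) * Y ω ∧
        ∃ x' ∈ Metric.closedBall (X ω) ε, f (X ω) * f x' < 0} ≤
      ENNReal.ofReal
        (∫ ω, ∑ k ∈ Finset.range m, φ (β * (a ω k * a ω (k + 1))) ∂μ) := by
  set C := {ω | 0 < f (X ω) * Y ω ∧
      ∃ x' ∈ Metric.closedBall (X ω) ε, f (X ω) * f x' < 0} with hCdef
  set g : Ω → ℝ := fun ω => ∑ k ∈ Finset.range m, φ (β * (a ω k * a ω (k + 1))) with hg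
  have hg0 : ∀ ω, 0 ≤ g ω := fun ω => Finset.sum_nonneg fun k _ => hφ0 _
  have hC1 : ∀ ω ∈ C, (1 : ℝ) ≤ g ω := by
    intro ω hω
    obtain ⟨k, hk, hk0⟩ := exists_consec_nonpos (a ω) m (ha ω hω.2)
    calc (1 : ℝ) ≤ φ (β * (a ω k * a ω (k + 1))) :=
          hφ1 _ (mul_nonpos_of_nonneg_of_nonpos hβ.le hk0)
      _ ≤ g ω := Finset.single_le_sum (f := fun i => φ (β * (a ω i * a ω (i + 1)))) (fun i _ => hφ0 _) hk
  have key : μ C ≤ ∫⁻ ω, ENNReal.ofReal (g ω) ∂μ := by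
    calc μ C = ∫⁻ ω in C, 1 ∂μ := by simp
      _ ≤ ∫⁻ ω in C, ENNReal.ofReal (g ω) ∂μ := by
          refine setLIntegral_mono_ae ?_ (Filter.Eventually.of_forall ?_)
          · exact hint.aemeasurable.ennreal_ofReal.restrict
          · intro ω hω
            simpa using ENNReal.one_le_ofReal.mpr (hC1 ω hω)
      _ ≤ ∫⁻ ω, ENNReal.ofReal (g ω) ∂μ := setLIntegral_le_lintegral _ _
  rwa [← ofReal_integral_eq_lintegral_ofReal hint
    (Filter.Eventually.of_forall hg0)] at key
end

section
/- Let m ≥ 1 and a : ℕ → ℝ be a sequence with a(k) ∈ (0,1) for all k ≤ m, which is monotone on {0,…,m} (either a(0) ≥ a(1) ≥ … ≥ a(m) or a(0) ≤ a(1) ≤ … ≤ a(m)). Then ∑_{k=0}^{m-1} kl(a(k), a(k+1)) ≤ kl(a(0), a(m)), where kl(s,t) = s·log(s/t) + (1−s)·log((1−s)/(1−t)). -/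
/-- Kullback–Leibler divergence between Bernoulli distributions with success
probabilities `s` and `t`. -/
noncomputable def klBer (s t : ℝ) : ℝ :=
  s * Real.log (s / t) + (1 - s) * Real.log ((1 - s) / (1 - t))

lemma klBer_self (s : ℝ) (hs0 : 0 < s) (hs1 : s < 1) : klBer s s = 0 := by
  unfold klBer
  rw [div_self hs0.ne', div_self (by linarith : (1 - s) ≠ 0), Real.log_one]
  ring

lemma klBer_key (s u t : ℝ) (hs0 : 0 < s) (hs1 : s < 1) (hu0 : 0 < u) (hu1 : u < 1)
    (ht0 : 0 < t) (ht1 : t < 1)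
    (h : (t ≤ u ∧ u ≤ s) ∨ (s ≤ u ∧ u ≤ t)) :
    klBer u t ≤ klBer s t - klBer s u := by
  unfold klBer
  rw [Real.log_div hs0.ne' ht0.ne', Real.log_div hs0.ne' hu0.ne',
      Real.log_div hu0.ne' ht0.ne',
      Real.log_div (by linarith : (1 - s) ≠ 0) (by linarith : (1 - t) ≠ 0),
      Real.log_div (by linarith : (1 - s) ≠ 0) (by linarith : (1 - u) ≠ 0),
      Real.log_div (by linarith : (1 - u) ≠ 0) (by linarith : (1 - t) ≠ 0)]
  rcases h with ⟨h1, h2⟩ | ⟨h1, h2⟩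
  · have l1 : Real.log t ≤ Real.log u := Real.log_le_log ht0 h1
    have l2 : Real.log (1 - u) ≤ Real.log (1 - t) :=
      Real.log_le_log (by linarith) (by linarith)
    nlinarith [mul_nonneg (by linarith : (0:ℝ) ≤ s - u)
      (by linarith : (0:ℝ) ≤ (Real.log u - Real.log t) - (Real.log (1 - u) - Real.log (1 - t)))]
  · have l1 : Real.log u ≤ Real.log t := Real.log_le_log hu0 h2
    have l2 : Real.log (1 - t) ≤ Real.log (1 - u) :=
      Real.log_le_log (by linarith) (by linarith)
    nlinarith [mul_nonneg (by linarith : (0:ℝ) ≤ u - s)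
      (by linarith : (0:ℝ) ≤ (Real.log t - Real.log u) - (Real.log (1 - t) - Real.log (1 - u)))]

/-- Theorem A.4: for a monotone sequence of Bernoulli success probabilities in
`(0,1)`, the sum of KL divergences between consecutive bridge probabilities is at
most the KL divergence between the endpoints. -/
theorem klBer_bridged_sum_le
    (m : ℕ) (hm : 1 ≤ m) (a : ℕ → ℝ)
    (ha : ∀ k ≤ m, a k ∈ Set.Ioo (0 : ℝ) 1)
    (hmono : (∀ k < m, a (k + 1) ≤ a k) ∨ (∀ k < m, a k ≤ a (k + 1))) :
    ∑ k ∈ Finset.range m, klBer (a k) (a (k + 1)) ≤ klBer (a 0) (a m) := by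
  have h0 := ha 0 (Nat.zero_le m)
  have step : ∀ k < m, klBer (a k) (a (k + 1)) ≤
      klBer (a 0) (a (k + 1)) - klBer (a 0) (a k) := by
    intro k hk
    have hak := ha k (le_of_lt hk)
    have hak1 := ha (k + 1) hk
    rcases hmono with hd | hi
    · have h0k : ∀ j ≤ m, a j ≤ a 0 := by
        intro j hj
        induction j with
        | zero => exact le_rfl
        | succ n ih =>
          have := hd n (by omega)
          have := ih (by omega)
          linarith
      exact klBer_key _ _ _ h0.1 h0.2 hak.1 hak.2 hak1.1 hak1.2
        (Or.inl ⟨hd k hk, h0k k (le_of_lt hk)⟩)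
    · have h0k : ∀ j ≤ m, a 0 ≤ a j := by
        intro j hj
        induction j with
        | zero => exact le_rfl
        | succ n ih =>
          have := hi n (by omega)
          have := ih (by omega)
          linarith
      exact klBer_key _ _ _ h0.1 h0.2 hak.1 hak.2 hak1.1 hak1.2
        (Or.inr ⟨h0k k (le_of_lt hk), hi k hk⟩)
  calc ∑ k ∈ Finset.range m, klBer (a k) (a (k + 1))
      ≤ ∑ k ∈ Finset.range m, (klBer (a 0) (a (k + 1)) - klBer (a 0) (a k)) :=
        Finset.sum_le_sum fun k hk => step k (Finset.mem_range.mp hk)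
    _ = klBer (a 0) (a m) - klBer (a 0) (a 0) :=
        Finset.sum_range_sub (fun k => klBer (a 0) (a k)) m
    _ = klBer (a 0) (a m) := by rw [klBer_self _ h0.1 h0.2]; ring
end

section
/- Let ι be a finite index set and p, r, q : ι → ℝ with pᵢ > 0, rᵢ > 0, qᵢ > 0 for all i, and suppose that for every i the value rᵢ lies between pᵢ and qᵢ (i.e. min(pᵢ,qᵢ) ≤ rᵢ ≤ max(pᵢ,qᵢ)). Then KL(p‖r) + KL(r‖q) ≤ KL(p‖q). -/
/-- Multi-class extension of Theorem A.4: if the intermediate positive vector `r`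
is componentwise between `p` and `q`, then `KL(p‖r) + KL(r‖q) ≤ KL(p‖q)`. -/
theorem kl_bridge_le
    {ι : Type*} [Fintype ι] (p r q : ι → ℝ)
    (hp : ∀ i, 0 < p i) (hr : ∀ i, 0 < r i) (hq : ∀ i, 0 < q i)
    (hbetween : ∀ i, min (p i) (q i) ≤ r i ∧ r i ≤ max (p i) (q i)) :
    (∑ i, p i * Real.log (p i / r i)) + (∑ i, r i * Real.log (r i / q i)) ≤
      ∑ i, p i * Real.log (p i / q i) := by
  rw [← Finset.sum_add_distrib]
  apply Finset.sum_le_sum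
  intro i _
  rw [Real.log_div (hp i).ne' (hr i).ne', Real.log_div (hr i).ne' (hq i).ne',
    Real.log_div (hp i).ne' (hq i).ne']
  have key : (r i - p i) * (Real.log (r i) - Real.log (q i)) ≤ 0 := by
    rcases le_total (p i) (q i) with h | h
    · have h1 : p i ≤ r i := le_trans (by simp [min_eq_left h]) (hbetween i).1
      have h2 : r i ≤ q i := le_trans (hbetween i).2 (by simp [max_eq_right h])
      exact mul_nonpos_of_nonneg_of_nonpos (by linarith)
        (by linarith [Real.log_le_log (hr i) h2])
    · have h1 : r i ≤ p i := le_trans (hbetween i).2 (by simp [max_eq_left h])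
      have h2 : q i ≤ r i := le_trans (by simp [min_eq_right h]) (hbetween i).1
      exact mul_nonpos_of_nonpos_of_nonneg (by linarith)
        (by linarith [Real.log_le_log (hq i) h2])
  nlinarith [key]
end

section
/- Let ι be a finite index set, m ≥ 1, and let p : ℕ → ι → ℝ be a sequence of vectors with p(k)ᵢ > 0 for all k ≤ m and all i. Suppose that for each i the scalar sequence k ↦ p(k)ᵢ is monotone on {0,…,m} (nonincreasing or nondecreasing, possibly depending on i). Then ∑_{k=0}^{m-1} KL(p(k) ‖ p(k+1)) ≤ KL(p(0) ‖ p(m)). -/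
/-- Multi-class, multi-bridge extension of Theorem A.4: if each component of the
sequence of positive vectors `p 0, …, p m` is monotone, then the bridged KL sum
over the `m` segments is at most the direct KL divergence between the endpoints. -/
theorem kl_bridged_sum_le
    {ι : Type*} [Fintype ι] (m : ℕ) (hm : 1 ≤ m) (p : ℕ → ι → ℝ)
    (hpos : ∀ k ≤ m, ∀ i, 0 < p k i)
    (hmono : ∀ i, (∀ k < m, p (k + 1) i ≤ p k i) ∨ (∀ k < m, p k i ≤ p (k + 1) i)) :
    ∑ k ∈ Finset.range m, ∑ i, p k i * Real.log (p k i / p (k + 1) i) ≤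
      ∑ i, p 0 i * Real.log (p 0 i / p m i) := by
  rw [Finset.sum_comm]
  refine Finset.sum_le_sum fun i _ => ?_
  set a : ℕ → ℝ := fun k => p k i with ha
  have hapos : ∀ k ≤ m, 0 < a k := fun k hk => hpos k hk i
  -- telescoping of logs
  have htel : ∑ k ∈ Finset.range m, Real.log (a k / a (k + 1))
      = Real.log (a 0 / a m) := by
    have h1 : ∀ k ∈ Finset.range m,
        Real.log (a k / a (k + 1)) = Real.log (a k) - Real.log (a (k + 1)) := by
      intro k hk
      rw [Finset.mem_range] at hk
      exact Real.log_div (hapos k hk.le).ne' (hapos (k + 1) hk).ne'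
    rw [Finset.sum_congr rfl h1, Finset.sum_range_sub' (fun k => Real.log (a k)),
      Real.log_div (hapos 0 (Nat.zero_le m)).ne' (hapos m le_rfl).ne']
  calc ∑ k ∈ Finset.range m, a k * Real.log (a k / a (k + 1))
      ≤ ∑ k ∈ Finset.range m, a 0 * Real.log (a k / a (k + 1)) := by
        refine Finset.sum_le_sum fun k hk => ?_
        rw [Finset.mem_range] at hk
        rcases hmono i with h | h
        · -- nonincreasing: log ≥ 0, a k ≤ a 0
          have hle : ∀ j ≤ m, a j ≤ a 0 := by
            intro j hj
            induction j with
            | zero => exact le_rfl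
            | succ n ih => exact (h n hj).trans (ih (Nat.le_of_succ_le hj))
          have hlog : 0 ≤ Real.log (a k / a (k + 1)) :=
            Real.log_nonneg ((one_le_div (hapos (k + 1) hk)).mpr (h k hk))
          exact mul_le_mul_of_nonneg_right (hle k hk.le) hlog
        · -- nondecreasing: log ≤ 0, a 0 ≤ a k
          have hle : ∀ j ≤ m, a 0 ≤ a j := by
            intro j hj
            induction j with
            | zero => exact le_rfl
            | succ n ih => exact (ih (Nat.le_of_succ_le hj)).trans (h n hj)
          have hlog : Real.log (a k / a (k + 1)) ≤ 0 :=
            Real.log_nonpos (div_nonneg (hapos k hk.le).le (hapos (k + 1) hk).le)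
              ((div_le_one (hapos (k + 1) hk)).mpr (h k hk))
          exact mul_le_mul_of_nonpos_right (hle k hk.le) hlog
    _ = a 0 * Real.log (a 0 / a m) := by rw [← Finset.mul_sum, htel]
end
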